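/- arXiv:2311.01115 — 4 statements merged into one kernel-verified Lean document; each statement's English description precedes it below -/
import Mathlib

section
/- Let n ≥ 1 and let p_0 < p_1 < … < p_{2n} be positions with an injective value assignment v such that the value at each even-index position is smaller than the values at its adjacent odd-index positions. Then there exists exactly one full binary tree on these 2n+1 nodes whose leaves are exactly the even-index nodes and whose internal nodes are exactly the odd-index nodes, satisfying Conditions I.1 and I.2. -/
/-- A full binary tree with nodes labeled by `α`. -/
inductive FullBinTree (α : Type) : Type
  | leaf : α → FullBinTree α
  | node : FullBinTree α → α → FullBinTree α → FullBinTree α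
  deriving DecidableEq

namespace FullBinTree

variable {α : Type}

/-- The in-order traversal of the tree. -/
def inorder : FullBinTree α → List α
  | leaf x => [x]
  | node l x r => inorder l ++ [x] ++ inorder r

def rootLabel : FullBinTree α → α
  | leaf x => x
  | node _ x _ => x

def leafList : FullBinTree α → List α
  | leaf x => [x]
  | node l _ r => leafList l ++ leafList r

def internalList : FullBinTree α → List α
  | leaf _ => []
  | node l x r => internalList l ++ [x] ++ internalList r

/-- Condition I.2: values strictly increase along every edge from child to parent. -/
def ValOrdered (v : α → ℝ) : FullBinTree α → Prop
  | leaf _ => True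
  | node l x r => v (rootLabel l) < v x ∧ v (rootLabel r) < v x ∧ ValOrdered v l ∧ ValOrdered v r

/-- `Sub s t` means `s` is a subtree of `t`. -/
inductive Sub : FullBinTree α → FullBinTree α → Prop
  | refl (t : FullBinTree α) : Sub t t
  | left {s l r : FullBinTree α} (x : α) : Sub s l → Sub s (node l x r)
  | right {s l r : FullBinTree α} (x : α) : Sub s r → Sub s (node l x r)

def IsParentOf (t : FullBinTree α) (p c : α) : Prop :=
  ∃ l r, Sub (node l p r) t ∧ (rootLabel l = c ∨ rootLabel r = c)

def IsLeftChildOf (t : FullBinTree α) (p c : α) : Prop :=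
  ∃ l r, Sub (node l p r) t ∧ rootLabel l = c

def IsRightChildOf (t : FullBinTree α) (p c : α) : Prop :=
  ∃ l r, Sub (node l p r) t ∧ rootLabel r = c

/-- Relabel the nodes of the tree. -/
def mapNodes {β : Type} (σ : α → β) : FullBinTree α → FullBinTree β
  | leaf x => leaf (σ x)
  | node l x r => node (mapNodes σ l) (σ x) (mapNodes σ r)

variable [DecidableEq α]

/-- The list of nodes on the path from the root down to `x` (for `x` a node of the tree). -/
def pathTo : FullBinTree α → α → List α
  | leaf y, _ => [y]
  | node l y r, x =>
    if x = y then [y]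
    else if x ∈ inorder l then y :: pathTo l x
    else y :: pathTo r x

/-- The subtree rooted at the node `x`. -/
def subtreeAt : FullBinTree α → α → FullBinTree α
  | leaf y, _ => leaf y
  | node l y r, x =>
    if x = y then node l y r
    else if x ∈ inorder l then subtreeAt l x
    else subtreeAt r x

/-- Condition II: the upper end `b(a)` of the path of the leaf `a`, i.e. the nearest
ancestor of `a` in whose subtree `a` does not have the smallest value; the result
`none` encodes the special root. -/
noncomputable def bOf (t : FullBinTree α) (v : α → ℝ) (a : α) : Option α :=
  (((pathTo t a).dropLast).reverse).find?
    (fun b => (inorder (subtreeAt t b)).any (fun u => decide (v u < v a)))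

/-- The edges `(child, parent)` of the Condition-II path of the leaf `a` in the
augmented tree; the parent `none` encodes the special root. -/
noncomputable def pathEdges (t : FullBinTree α) (v : α → ℝ) (a : α) : List (α × Option α) :=
  let rev := ((pathTo t a).dropLast).reverse
  match rev.findIdx?
      (fun b => (inorder (subtreeAt t b)).any (fun u => decide (v u < v a))) with
  | some k => ((a :: rev.take (k+1)).zip (rev.take (k+1))).map (fun cp => (cp.1, some cp.2))
  | none => ((a :: rev).zip rev).map (fun cp => (cp.1, some cp.2))
      ++ [((a :: rev).getLast (List.cons_ne_nil _ _), none)]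

end FullBinTree

open FullBinTree

section Aux

variable {α : Type}

lemma aux_inorder_length_odd (t : FullBinTree α) : Odd (inorder t).length := by
  induction t with
  | leaf x => exact ⟨0, rfl⟩
  | node l x r ihl ihr =>
    obtain ⟨a, ha⟩ := ihl
    obtain ⟨b, hb⟩ := ihr
    exact ⟨a + b + 1, by simp [inorder]; omega⟩

lemma aux_rootLabel_mem (t : FullBinTree α) : rootLabel t ∈ inorder t := by
  cases t <;> simp [inorder, rootLabel]

lemma aux_mem_inorder_iff (t : FullBinTree α) (a : α) :
    a ∈ inorder t ↔ a ∈ leafList t ∨ a ∈ internalList t := by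
  induction t with
  | leaf x => simp [inorder, leafList, internalList]
  | node l x r ihl ihr =>
    simp [inorder, leafList, internalList, ihl, ihr]
    tauto

lemma aux_le_root (v : α → ℝ) : ∀ t : FullBinTree α, ValOrdered v t →
    ∀ a ∈ inorder t, v a ≤ v (rootLabel t) := by
  intro t
  induction t with
  | leaf x => intro _ a ha; simp [inorder] at ha; subst ha; simp [rootLabel]
  | node l x r ihl ihr =>
    intro hvo a ha
    simp only [ValOrdered] at hvo
    simp only [inorder, List.mem_append, List.mem_singleton] at ha
    show v a ≤ v x
    rcases ha with (ha | ha) | ha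
    · exact le_of_lt (lt_of_le_of_lt (ihl hvo.2.2.1 a ha) hvo.1)
    · subst ha; exact le_refl _
    · exact le_of_lt (lt_of_le_of_lt (ihr hvo.2.2.2 a ha) hvo.2.1)

lemma aux_split_unique {a : α} : ∀ {l1 : List α} {l2 r1 r2 : List α},
    l1 ++ a :: r1 = l2 ++ a :: r2 → a ∉ l1 → a ∉ l2 → l1 = l2 ∧ r1 = r2 := by
  intro l1
  induction l1 with
  | nil =>
    intro l2 r1 r2 h h1 h2
    cases l2 with
    | nil => simpa using h
    | cons b l2 =>
      simp only [List.nil_append, List.cons_append, List.cons.injEq] at h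
      exact absurd (h.1 ▸ List.mem_cons_self (a := b) (l := l2)) h2
  | cons b l1 ih =>
    intro l2 r1 r2 h h1 h2
    cases l2 with
    | nil =>
      simp only [List.nil_append, List.cons_append, List.cons.injEq] at h
      exact absurd (h.1 ▸ List.mem_cons_self (a := b) (l := l1)) h1
    | cons c l2 =>
      simp only [List.cons_append, List.cons.injEq] at h
      obtain ⟨rfl, h⟩ := h
      have := ih h (fun hm => h1 (List.mem_cons_of_mem _ hm))
        (fun hm => h2 (List.mem_cons_of_mem _ hm))
      exact ⟨by rw [this.1], this.2⟩

lemma aux_parity {N : ℕ} : ∀ (t : FullBinTree (Fin N)) (l : ℕ), Even l →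
    (inorder t).map Fin.val = List.range' l (inorder t).length →
    (∀ a ∈ leafList t, Even (a : ℕ)) ∧ (∀ b ∈ internalList t, ¬ Even (b : ℕ)) := by
  intro t
  induction t with
  | leaf x =>
    intro l hl h
    have hxl : (x : ℕ) = l := by simpa [inorder, List.range'_one] using h
    constructor
    · intro a ha
      simp only [leafList, List.mem_singleton] at ha
      subst ha
      rw [hxl]; exact hl
    · intro b hb; simp [internalList] at hb
  | node t1 x t2 ih1 ih2 =>
    intro l hl h
    set k1 := (inorder t1).length with hk1
    set k2 := (inorder t2).length with hk2
    have hlen : (inorder (node t1 x t2)).length = k1 + 1 + k2 := by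
      simp [inorder]; omega
    have hrhs : List.range' l (k1 + 1 + k2) =
        List.range' l k1 ++ (List.range' (l + k1) 1 ++ List.range' (l + k1 + 1) k2) := by
      have h1 := List.range'_append (s := l + k1) (m := 1) (n := k2) (step := 1)
      have h2 := List.range'_append (s := l) (m := k1) (n := k2 + 1) (step := 1)
      simp only [Nat.one_mul, Nat.mul_one] at h1 h2
      rw [h1, show 1 + k2 = k2 + 1 from by omega, h2]
      congr 1
      omega
    have hmap : (inorder t1).map Fin.val ++ ([x.val] ++ (inorder t2).map Fin.val) =
        List.range' l k1 ++ (List.range' (l + k1) 1 ++ List.range' (l + k1 + 1) k2) := by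
      rw [← hrhs, ← hlen, ← h]
      simp [inorder]
    have hsp1 := List.append_inj hmap (by simp [hk1])
    have hsp2 := List.append_inj hsp1.2 (by simp)
    have hxval : (x : ℕ) = l + k1 := by
      have := hsp2.1
      simpa [List.range'_one] using this
    have hodd1 : Odd k1 := aux_inorder_length_odd t1
    have hxodd : ¬ Even (x : ℕ) := by
      rw [hxval]
      rw [Nat.even_iff] at hl ⊢
      rw [Nat.odd_iff] at hodd1
      omega
    have he2 : Even (l + k1 + 1) := by
      rw [Nat.even_iff] at hl ⊢
      rw [Nat.odd_iff] at hodd1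
      omega
    have hI1 := ih1 l hl hsp1.1
    have hI2 := ih2 (l + k1 + 1) he2 hsp2.2
    constructor
    · intro a ha
      simp only [leafList, List.mem_append] at ha
      rcases ha with ha | ha
      · exact hI1.1 a ha
      · exact hI2.1 a ha
    · intro b hb
      simp only [internalList, List.mem_append, List.mem_singleton] at hb
      rcases hb with (hb | hb) | hb
      · exact hI1.2 b hb
      · subst hb; exact hxodd
      · exact hI2.2 b hb

end Aux

lemma aux_key (n : ℕ) (v : Fin (2*n+1) → ℝ)
    (hinj : Function.Injective v)
    (halt : ∀ (i : ℕ) (hi : i < 2*n+1) (hi1 : i+1 < 2*n+1),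
      (Even i → v ⟨i, hi⟩ < v ⟨i+1, hi1⟩) ∧ (¬ Even i → v ⟨i+1, hi1⟩ < v ⟨i, hi⟩)) :
    ∀ d l r : ℕ, r ≤ 2*n → Even l → Even r → l ≤ r → r - l = d →
    ∃! t : FullBinTree (Fin (2*n+1)),
      (inorder t).map Fin.val = List.range' l (r+1-l) ∧ ValOrdered v t := by
  intro d
  induction d using Nat.strong_induction_on with
  | _ d IH =>
  intro l r hr hel her hlr hd
  rcases eq_or_lt_of_le hlr with heq | hlt
  · -- base case l = r
    subst heq
    have h1 : l + 1 - l = 1 := by omega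
    refine ⟨leaf ⟨l, by omega⟩, ⟨by simp [inorder, h1, List.range'_one], by simp [ValOrdered]⟩, ?_⟩
    rintro t' ⟨hmap', hvo'⟩
    cases t' with
    | leaf a =>
      congr 1
      apply Fin.ext
      simpa [inorder, h1, List.range'_one] using hmap'
    | node t1' x t2' =>
      exfalso
      have := congrArg List.length hmap'
      obtain ⟨a, ha⟩ := aux_inorder_length_odd t1'
      obtain ⟨b, hb⟩ := aux_inorder_length_odd t2'
      simp [inorder, h1] at this
      omega
  · -- main case l < r
    set S : Finset (Fin (2*n+1)) :=
      Finset.univ.filter (fun a => l ≤ (a : ℕ) ∧ (a : ℕ) ≤ r) with hS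
    have hSne : S.Nonempty := ⟨⟨l, by omega⟩, by simp [hS]; omega⟩
    obtain ⟨m, hmS, hmax⟩ := Finset.exists_max_image S v hSne
    have hm : l ≤ (m : ℕ) ∧ (m : ℕ) ≤ r := by simpa [hS] using hmS
    have hmo : ¬ Even (m : ℕ) := by
      intro hev
      rcases lt_or_eq_of_le hm.2 with hmr | hmr
      · have h1 := (halt (m : ℕ) m.isLt (by omega)).1 hev
        have h2 : (⟨(m : ℕ) + 1, by omega⟩ : Fin (2*n+1)) ∈ S := by simp [hS]; omega
        have h3 := hmax _ h2
        have h4 : (⟨(m : ℕ), m.isLt⟩ : Fin (2*n+1)) = m := Fin.ext rfl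
        rw [h4] at h1
        linarith
      · have hl2 : l + 2 ≤ (m : ℕ) := by
          rw [Nat.even_iff] at hel her hev
          omega
        have hio : ¬ Even ((m : ℕ) - 1) := by
          rw [Nat.even_iff] at hev ⊢
          omega
        have h1 := (halt ((m : ℕ) - 1) (by omega) (by omega)).2 hio
        have h2 : (⟨(m : ℕ) - 1, by omega⟩ : Fin (2*n+1)) ∈ S := by simp [hS]; omega
        have h3 := hmax _ h2
        have h4 : (⟨(m : ℕ) - 1 + 1, by omega⟩ : Fin (2*n+1)) = m := Fin.ext (by simp; omega)
        rw [h4] at h1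
        linarith
    have hlm : l < (m : ℕ) ∧ (m : ℕ) < r := by
      rw [Nat.even_iff] at hel her
      rw [Nat.even_iff] at hmo
      omega
    have hem1 : Even ((m : ℕ) - 1) := by
      rw [Nat.even_iff] at hel ⊢; rw [Nat.even_iff] at hmo; omega
    have hem2 : Even ((m : ℕ) + 1) := by
      rw [Nat.even_iff] at hel ⊢; rw [Nat.even_iff] at hmo; omega
    obtain ⟨t1, ⟨hm1, hv1⟩, hu1⟩ :=
      IH ((m : ℕ) - 1 - l) (by omega) l ((m : ℕ) - 1) (by omega) hel hem1 (by omega) rfl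
    obtain ⟨t2, ⟨hm2, hv2⟩, hu2⟩ :=
      IH (r - ((m : ℕ) + 1)) (by omega) ((m : ℕ) + 1) r hr hem2 her (by omega) rfl
    rw [show (m : ℕ) - 1 + 1 - l = (m : ℕ) - l from by omega] at hm1
    rw [show r + 1 - ((m : ℕ) + 1) = r - (m : ℕ) from by omega] at hm2
    have hrange : List.range' l ((m : ℕ) - l) ++ (m : ℕ) :: List.range' ((m : ℕ) + 1) (r - (m : ℕ))
        = List.range' l (r + 1 - l) := by
      have h1 : (m : ℕ) :: List.range' ((m : ℕ) + 1) (r - (m : ℕ))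
          = List.range' (m : ℕ) (r - (m : ℕ) + 1) := by
        rw [List.range'_succ]
      rw [h1]
      have h2 := List.range'_append (s := l) (m := (m : ℕ) - l) (n := r - (m : ℕ) + 1) (step := 1)
      rw [show l + 1 * ((m : ℕ) - l) = (m : ℕ) from by omega,
        show (m : ℕ) - l + (r - (m : ℕ) + 1) = r + 1 - l from by omega] at h2
      exact h2
    -- root bounds
    have hroot1 : v (rootLabel t1) < v m := by
      have hmem : Fin.val (rootLabel t1) ∈ List.range' l ((m : ℕ) - l) := by
        rw [← hm1]; exact List.mem_map_of_mem (f := Fin.val) (aux_rootLabel_mem t1)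
      have hb := List.mem_range'_1.mp hmem
      have hS1 : rootLabel t1 ∈ S := by simp [hS]; omega
      refine lt_of_le_of_ne (hmax _ hS1) (fun h => ?_)
      have := congrArg Fin.val (hinj h)
      omega
    have hroot2 : v (rootLabel t2) < v m := by
      have hmem : Fin.val (rootLabel t2) ∈ List.range' ((m : ℕ) + 1) (r - (m : ℕ)) := by
        rw [← hm2]; exact List.mem_map_of_mem (f := Fin.val) (aux_rootLabel_mem t2)
      have hb := List.mem_range'_1.mp hmem
      have hS2 : rootLabel t2 ∈ S := by simp [hS]; omega
      refine lt_of_le_of_ne (hmax _ hS2) (fun h => ?_)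
      have := congrArg Fin.val (hinj h)
      omega
    have hTmap : (inorder (node t1 m t2)).map Fin.val = List.range' l (r + 1 - l) := by
      rw [← hrange]
      simp [inorder, hm1, hm2]
    refine ⟨node t1 m t2, ⟨hTmap, ?_⟩, ?_⟩
    · exact ⟨hroot1, hroot2, hv1, hv2⟩
    · rintro t' ⟨hmap', hvo'⟩
      cases t' with
      | leaf a =>
        exfalso
        have := congrArg List.length hmap'
        simp [inorder] at this
        omega
      | node t1' x t2' =>
        simp only [ValOrdered] at hvo'
        have hxm : x = m := by
          have hx_mem : x ∈ inorder (node t1' x t2') := by simp [inorder]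
          have hxval : (x : ℕ) ∈ List.range' l (r + 1 - l) := by
            rw [← hmap']; exact List.mem_map_of_mem hx_mem
          have hxb := List.mem_range'_1.mp hxval
          have hxS : x ∈ S := by simp [hS]; omega
          have h1 : v x ≤ v m := hmax _ hxS
          have hm_in : (m : ℕ) ∈ (inorder (node t1' x t2')).map Fin.val := by
            rw [hmap']; exact List.mem_range'_1.mpr ⟨hm.1, by omega⟩
          obtain ⟨m', hm'mem, hm'val⟩ := List.mem_map.mp hm_in
          have hmm : m' = m := Fin.ext hm'val
          have h2 : v m' ≤ v x :=
            aux_le_root v (node t1' x t2') ⟨hvo'.1, hvo'.2.1, hvo'.2.2.1, hvo'.2.2.2⟩ m' hm'mem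
          rw [hmm] at h2
          exact hinj (le_antisymm h1 h2)
        subst hxm
        have hsplit : (inorder t1').map Fin.val ++ (x : ℕ) :: (inorder t2').map Fin.val
            = List.range' l ((x : ℕ) - l) ++ (x : ℕ) :: List.range' ((x : ℕ) + 1) (r - (x : ℕ)) := by
          rw [hrange, ← hmap']
          simp [inorder]
        have hnot1 : (x : ℕ) ∉ (inorder t1').map Fin.val := by
          intro hmem
          obtain ⟨a, ha, hav⟩ := List.mem_map.mp hmem
          have haa : a = x := Fin.ext hav
          have h1 : v a ≤ v (rootLabel t1') := aux_le_root v t1' hvo'.2.2.1 a ha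
          rw [haa] at h1
          linarith [hvo'.1]
        have hnot2 : (x : ℕ) ∉ List.range' l ((x : ℕ) - l) := by
          intro h
          have := List.mem_range'_1.mp h
          omega
        obtain ⟨e1, e2⟩ := aux_split_unique hsplit hnot1 hnot2
        have ht1 : t1' = t1 := by
          apply hu1
          refine ⟨?_, hvo'.2.2.1⟩
          rw [e1]
          congr 1
          omega
        have ht2 : t2' = t2 := by
          apply hu2
          refine ⟨?_, hvo'.2.2.2⟩
          rw [e2]
          congr 1
          omega
        rw [ht1, ht2]

/-- For `n ≥ 1` and an injective value assignment on the positions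
`0 < 1 < … < 2n` in which each even-index position has smaller value than its adjacent
odd-index positions, there is exactly one full binary tree on these `2n+1` nodes whose
leaves are exactly the even-index nodes, whose internal nodes are exactly the odd-index
nodes, and which satisfies Conditions I.1 and I.2. -/
theorem statement0 (n : ℕ) (hn : 1 ≤ n) (v : Fin (2*n+1) → ℝ)
    (hinj : Function.Injective v)
    (halt : ∀ (i : ℕ) (hi : i < 2*n+1) (hi1 : i+1 < 2*n+1),
      (Even i → v ⟨i, hi⟩ < v ⟨i+1, hi1⟩) ∧ (¬ Even i → v ⟨i+1, hi1⟩ < v ⟨i, hi⟩)) :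
    ∃! t : FullBinTree (Fin (2*n+1)),
      inorder t = List.finRange (2*n+1) ∧
      (∀ a, a ∈ leafList t ↔ Even (a : ℕ)) ∧
      (∀ b, b ∈ internalList t ↔ ¬ Even (b : ℕ)) ∧
      ValOrdered v t := by
  obtain ⟨t, ⟨hmap, hvo⟩, huniq⟩ :=
    aux_key n v hinj halt (2*n) 0 (2*n) le_rfl Even.zero ⟨n, two_mul n⟩ (Nat.zero_le _) (by omega)
  have hco : (List.finRange (2*n+1)).map Fin.val = List.range' 0 (2*n+1-0) := by
    rw [Nat.sub_zero, ← List.range_eq_range']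
    apply List.ext_getElem <;> simp
  have hio : inorder t = List.finRange (2*n+1) := by
    apply List.map_injective_iff.mpr Fin.val_injective
    rw [hmap, hco]
  have hlen : (inorder t).length = 2*n+1-0 := by
    have := congrArg List.length hmap
    simpa using this
  obtain ⟨hL, hI⟩ := aux_parity t 0 Even.zero (by rw [hlen]; exact hmap)
  refine ⟨t, ⟨hio, ?_, ?_, hvo⟩, ?_⟩
  · intro a
    refine ⟨hL a, fun hev => ?_⟩
    have hmem : a ∈ inorder t := by rw [hio]; exact List.mem_finRange a
    rcases (aux_mem_inorder_iff t a).mp hmem with h | h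
    · exact h
    · exact absurd hev (hI a h)
  · intro b
    refine ⟨hI b, fun hev => ?_⟩
    have hmem : b ∈ inorder t := by rw [hio]; exact List.mem_finRange b
    rcases (aux_mem_inorder_iff t b).mp hmem with h | h
    · exact absurd (hL b h) hev
    · exact h
  · rintro t' ⟨h1, _, _, h4⟩
    exact huniq t' ⟨by rw [h1, hco], h4⟩
end

section
/- Let T be the unique full binary tree satisfying Conditions I.1 and I.2 for an alternating position sequence p_0 < … < p_{2n} with injective values, augmented with the special root. Then the Condition-II paths P(a), taken over all n+1 leaves a, are pairwise edge-disjoint, their union covers every edge of the augmented tree (including the edge to the special root), and the map a ↦ b(a) is a bijection from the set of leaves onto the set consisting of the internal nodes together with the special root. -/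
namespace FullBinTree

variable {α : Type}

variable [DecidableEq α]

/-! ### Auxiliary development -/

set_option linter.unusedSectionVars false
set_option maxHeartbeats 1000000

section Aux

variable {α : Type} [DecidableEq α] {v : α → ℝ}

lemma inorder_ne_nil (t : FullBinTree α) : inorder t ≠ [] := by
  cases t <;> simp [inorder]

lemma rootLabel_mem_inorder (t : FullBinTree α) : rootLabel t ∈ inorder t := by
  cases t <;> simp [inorder, rootLabel]

lemma leafList_subset_inorder (t : FullBinTree α) : ∀ a ∈ leafList t, a ∈ inorder t := by
  induction t with
  | leaf x => simp [leafList, inorder]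
  | node l x r ihl ihr =>
    intro a ha
    simp only [leafList, inorder, List.mem_append, List.mem_singleton] at *
    rcases ha with h | h
    · exact Or.inl (Or.inl (ihl a h))
    · exact Or.inr (ihr a h)

lemma nodup_node {l r : FullBinTree α} {x : α}
    (h : (inorder (node l x r)).Nodup) :
    (inorder l).Nodup ∧ (inorder r).Nodup ∧ x ∉ inorder l ∧ x ∉ inorder r ∧
      ∀ a ∈ inorder l, a ∉ inorder r := by
  have h' : (inorder l ++ x :: inorder r).Nodup := by
    simpa [inorder, List.append_assoc] using h
  rw [List.nodup_append] at h'
  obtain ⟨hl, hxr, hdisj⟩ := h'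
  rw [List.nodup_cons] at hxr
  refine ⟨hl, hxr.2, ?_, hxr.1, ?_⟩
  · intro hxl; exact (hdisj x hxl x (by simp)) rfl
  · intro a hal har; exact (hdisj a hal a (by simp [har])) rfl

lemma valOrdered_node {l r : FullBinTree α} {x : α}
    (h : ValOrdered v (node l x r)) :
    v (rootLabel l) < v x ∧ v (rootLabel r) < v x ∧ ValOrdered v l ∧ ValOrdered v r := h

lemma sub_inorder {s t : FullBinTree α} (h : Sub s t) : List.Sublist (inorder s) (inorder t) := by
  induction h with
  | refl => exact List.Sublist.refl _
  | left x h ih =>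
    refine ih.trans ?_
    simp only [inorder]
    exact ((List.sublist_append_left _ _).trans (List.sublist_append_left _ _))
  | right x h ih =>
    refine ih.trans ?_
    simp only [inorder]
    exact List.sublist_append_right _ _

lemma sub_leafList {s t : FullBinTree α} (h : Sub s t) : List.Sublist (leafList s) (leafList t) := by
  induction h with
  | refl => exact List.Sublist.refl _
  | left x h ih => exact ih.trans (by simp only [leafList]; exact List.sublist_append_left _ _)
  | right x h ih => exact ih.trans (by simp only [leafList]; exact List.sublist_append_right _ _)

lemma sub_internalList {s t : FullBinTree α} (h : Sub s t) : List.Sublist (internalList s) (internalList t) := by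
  induction h with
  | refl => exact List.Sublist.refl _
  | left x h ih =>
    refine ih.trans ?_
    simp only [internalList]
    exact ((List.sublist_append_left _ _).trans (List.sublist_append_left _ _))
  | right x h ih =>
    refine ih.trans ?_
    simp only [internalList]
    exact List.sublist_append_right _ _

lemma valOrdered_sub {s t : FullBinTree α} (h : Sub s t) (hv : ValOrdered v t) :
    ValOrdered v s := by
  induction h with
  | refl => exact hv
  | left x h ih => exact ih (valOrdered_node hv).2.2.1
  | right x h ih => exact ih (valOrdered_node hv).2.2.2

/-- The leaf of minimum value. -/
noncomputable def minNode (v : α → ℝ) : FullBinTree α → α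
  | leaf x => x
  | node l _ r => if v (minNode v l) ≤ v (minNode v r) then minNode v l else minNode v r

lemma minNode_mem_leafList (t : FullBinTree α) : minNode v t ∈ leafList t := by
  induction t with
  | leaf x => simp [minNode, leafList]
  | node l x r ihl ihr =>
    simp only [minNode, leafList, List.mem_append]
    split
    · exact Or.inl ihl
    · exact Or.inr ihr

lemma minNode_mem_inorder (t : FullBinTree α) : minNode v t ∈ inorder t :=
  leafList_subset_inorder t _ (minNode_mem_leafList t)

lemma minNode_le {t : FullBinTree α} (hv : ValOrdered v t) :
    ∀ u ∈ inorder t, v (minNode v t) ≤ v u := by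
  induction t with
  | leaf x => simp [minNode, inorder]
  | node l x r ihl ihr =>
    obtain ⟨h1, h2, hvl, hvr⟩ := valOrdered_node hv
    have hml : v (minNode v (node l x r)) ≤ v (minNode v l) := by
      simp only [minNode]; split
      · exact le_refl _
      · exact le_of_lt (lt_of_not_ge (by assumption))
    have hmr : v (minNode v (node l x r)) ≤ v (minNode v r) := by
      simp only [minNode]; split
      · assumption
      · exact le_refl _
    intro u hu
    simp only [inorder, List.mem_append, List.mem_singleton] at hu
    rcases hu with (hu | rfl) | hu
    · exact hml.trans (ihl hvl u hu)
    · exact hml.trans ((ihl hvl _ (rootLabel_mem_inorder l)).trans (le_of_lt h1))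
    · exact hmr.trans (ihr hvr u hu)

lemma minNode_eq_iff {t : FullBinTree α} (hinj : Function.Injective v)
    (hv : ValOrdered v t) {a : α} (ha : a ∈ inorder t) :
    a = minNode v t ↔ ∀ u ∈ inorder t, ¬ v u < v a := by
  constructor
  · rintro rfl u hu
    exact not_lt.mpr (minNode_le hv u hu)
  · intro h
    have h1 : v a ≤ v (minNode v t) := not_lt.1 (h _ (minNode_mem_inorder t))
    have h2 : v (minNode v t) ≤ v a := minNode_le hv a ha
    exact hinj (le_antisymm h2 h1).symm

lemma minNode_sub {s t : FullBinTree α} (hinj : Function.Injective v)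
    (hv : ValOrdered v t) (hsub : Sub s t) {a : α} (ha : a ∈ inorder s)
    (h : a = minNode v t) : a = minNode v s := by
  rw [minNode_eq_iff hinj (valOrdered_sub hsub hv) ha]
  intro u hu
  rw [minNode_eq_iff hinj hv (List.Sublist.subset (sub_inorder hsub) ha)] at h
  exact h u (List.Sublist.subset (sub_inorder hsub) hu)

/-- Case analysis for a leaf of a `node`. -/
lemma leaf_mem_cases {l r : FullBinTree α} {x a : α}
    (hnd : (inorder (node l x r)).Nodup) (ha : a ∈ leafList (node l x r)) :
    (a ∈ inorder l ∧ a ∈ leafList l) ∨ (a ∉ inorder l ∧ a ≠ x ∧ a ∈ leafList r) := by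
  obtain ⟨hndl, hndr, hxl, hxr, hdisj⟩ := nodup_node hnd
  simp only [leafList, List.mem_append] at ha
  rcases ha with h | h
  · exact Or.inl ⟨leafList_subset_inorder l a h, h⟩
  · have har : a ∈ inorder r := leafList_subset_inorder r a h
    refine Or.inr ⟨fun hal => hdisj a hal har, fun hax => hxr (hax ▸ har), h⟩

/-! ### pathTo, subtreeAt, ancestors -/

lemma pathTo_ne_nil (t : FullBinTree α) (a : α) : pathTo t a ≠ [] := by
  cases t with
  | leaf y => simp [pathTo]
  | node l y r => simp only [pathTo]; split_ifs <;> simp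

lemma pathTo_left {l r : FullBinTree α} {x a : α}
    (hnd : (inorder (node l x r)).Nodup) (ha : a ∈ inorder l) :
    pathTo (node l x r) a = x :: pathTo l a := by
  have hax : ¬ a = x := fun h => (nodup_node hnd).2.2.1 (h ▸ ha)
  simp [pathTo, hax, ha]

lemma pathTo_right {l r : FullBinTree α} {x a : α}
    (hal : a ∉ inorder l) (hax : a ≠ x) :
    pathTo (node l x r) a = x :: pathTo r a := by
  simp [pathTo, hax, hal]

lemma subtreeAt_x {l r : FullBinTree α} {x : α} :
    subtreeAt (node l x r) x = node l x r := by
  simp [subtreeAt]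

lemma subtreeAt_left {l r : FullBinTree α} {x a : α}
    (hnd : (inorder (node l x r)).Nodup) (ha : a ∈ inorder l) :
    subtreeAt (node l x r) a = subtreeAt l a := by
  have hax : ¬ a = x := fun h => (nodup_node hnd).2.2.1 (h ▸ ha)
  simp [subtreeAt, hax, ha]

lemma subtreeAt_right {l r : FullBinTree α} {x a : α}
    (hal : a ∉ inorder l) (hax : a ≠ x) :
    subtreeAt (node l x r) a = subtreeAt r a := by
  simp [subtreeAt, hax, hal]

lemma pathTo_subset {t : FullBinTree α} {a : α} (ha : a ∈ inorder t) :
    ∀ b ∈ pathTo t a, b ∈ inorder t := by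
  induction t with
  | leaf y => simp [pathTo, inorder]
  | node l y r ihl ihr =>
    intro b hb
    by_cases hay : a = y
    · simp only [pathTo, if_pos hay, List.mem_singleton] at hb
      exact hb ▸ rootLabel_mem_inorder (node l y r)
    · by_cases hal : a ∈ inorder l
      · simp only [pathTo, if_neg hay, if_pos hal, List.mem_cons] at hb
        rcases hb with hb | hb
        · exact hb ▸ rootLabel_mem_inorder (node l y r)
        · have := ihl hal b hb
          simp only [inorder, List.mem_append]; exact Or.inl (Or.inl this)
      · have har : a ∈ inorder r := by
          simp only [inorder, List.mem_append, List.mem_singleton] at ha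
          tauto
        simp only [pathTo, if_neg hay, if_neg hal, List.mem_cons] at hb
        rcases hb with hb | hb
        · exact hb ▸ rootLabel_mem_inorder (node l y r)
        · have := ihr har b hb
          simp only [inorder, List.mem_append]; exact Or.inr this

/-- The ancestors of `a`, from the parent of `a` up to the root. -/
def anc (t : FullBinTree α) (a : α) : List α := ((pathTo t a).dropLast).reverse

lemma anc_leaf {x a : α} : anc (leaf x) a = [] := by
  simp [anc, pathTo]

lemma anc_left {l r : FullBinTree α} {x a : α}
    (hnd : (inorder (node l x r)).Nodup) (ha : a ∈ inorder l) :
    anc (node l x r) a = anc l a ++ [x] := by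
  rw [anc, pathTo_left hnd ha, List.dropLast_cons_of_ne_nil (pathTo_ne_nil _ _),
    List.reverse_cons]
  rfl

lemma anc_right {l r : FullBinTree α} {x a : α}
    (hal : a ∉ inorder l) (hax : a ≠ x) :
    anc (node l x r) a = anc r a ++ [x] := by
  rw [anc, pathTo_right hal hax, List.dropLast_cons_of_ne_nil (pathTo_ne_nil _ _),
    List.reverse_cons]
  rfl

lemma anc_subset {t : FullBinTree α} {a : α} (ha : a ∈ inorder t) :
    ∀ b ∈ anc t a, b ∈ inorder t := by
  intro b hb
  rw [anc, List.mem_reverse] at hb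
  exact pathTo_subset ha b ((List.dropLast_sublist _).subset hb)

lemma getLast_eq_of_getLast? {β : Type*} {L : List β} (hne : L ≠ []) {b : β}
    (h : L.getLast? = some b) : L.getLast hne = b := by
  rw [List.getLast?_eq_getLast hne] at h
  exact Option.some_injective _ h

lemma getLast_cons_anc {t : FullBinTree α} {a : α}
    (hnd : (inorder t).Nodup) (ha : a ∈ leafList t) :
    (a :: anc t a).getLast (List.cons_ne_nil _ _) = rootLabel t := by
  apply getLast_eq_of_getLast?
  cases t with
  | leaf x =>
    simp only [leafList, List.mem_singleton] at ha
    subst ha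
    simp [anc_leaf, rootLabel]
  | node l x r =>
    rcases leaf_mem_cases hnd ha with ⟨h1, _⟩ | ⟨h1, h2, _⟩
    · rw [anc_left hnd h1]
      show ((a :: anc l a) ++ [x]).getLast? = some (rootLabel (node l x r))
      exact List.getLast?_concat
    · rw [anc_right h1 h2]
      show ((a :: anc r a) ++ [x]).getLast? = some (rootLabel (node l x r))
      exact List.getLast?_concat

end Aux
section Aux2

variable {α : Type} [DecidableEq α] {v : α → ℝ}

/-- The predicate used in `bOf` and `pathEdges`. -/
noncomputable def predB (t : FullBinTree α) (v : α → ℝ) (a : α) : α → Bool :=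
  fun b => (inorder (subtreeAt t b)).any (fun u => decide (v u < v a))

lemma bOf_eq_find (t : FullBinTree α) (a : α) :
    bOf t v a = (anc t a).find? (predB t v a) := rfl

lemma predB_eq_false_iff {t : FullBinTree α} {a b : α} :
    predB t v a b = false ↔ ∀ u ∈ inorder (subtreeAt t b), ¬ v u < v a := by
  simp [predB]

lemma predB_eq_true_iff {t : FullBinTree α} {a b : α} :
    predB t v a b = true ↔ ∃ u ∈ inorder (subtreeAt t b), v u < v a := by
  simp [predB]

lemma find?_congr {β : Type*} {p q : β → Bool} :
    ∀ (L : List β), (∀ b ∈ L, p b = q b) → L.find? p = L.find? q := by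
  intro L
  induction L with
  | nil => intro _; rfl
  | cons b L ih =>
    intro h
    rw [List.find?_cons, List.find?_cons, h b (by simp), ih (fun c hc => h c (by simp [hc]))]

lemma findIdx?_congr {β : Type*} {p q : β → Bool} :
    ∀ (L : List β), (∀ b ∈ L, p b = q b) → L.findIdx? p = L.findIdx? q := by
  intro L
  induction L with
  | nil => intro _; rfl
  | cons b L ih =>
    intro h
    rw [List.findIdx?_cons, List.findIdx?_cons, h b (by simp),
      ih (fun c hc => h c (by simp [hc]))]

/-- Within a node, the `predB` of the big tree agrees with that of a child on the
ancestors inside the child. -/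
lemma predB_anc_left {l r : FullBinTree α} {x a : α}
    (hnd : (inorder (node l x r)).Nodup) (ha : a ∈ inorder l) :
    ∀ b ∈ anc l a, predB (node l x r) v a b = predB l v a b := by
  intro b hb
  have hbl : b ∈ inorder l := anc_subset ha b hb
  rw [predB, predB, subtreeAt_left hnd hbl]

lemma predB_anc_right {l r : FullBinTree α} {x a : α}
    (hnd : (inorder (node l x r)).Nodup) (ha : a ∈ inorder r) :
    ∀ b ∈ anc r a, predB (node l x r) v a b = predB r v a b := by
  intro b hb
  obtain ⟨-, -, -, hxr, hdisj⟩ := nodup_node hnd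
  have hbr : b ∈ inorder r := anc_subset ha b hb
  have hbl : b ∉ inorder l := fun h => hdisj b h hbr
  have hbx : b ≠ x := fun h => hxr (h ▸ hbr)
  rw [predB, predB, subtreeAt_right hbl hbx]

lemma predB_x {l r : FullBinTree α} {x a : α} :
    predB (node l x r) v a x
      = (inorder (node l x r)).any (fun u => decide (v u < v a)) := by
  rw [predB, subtreeAt_x]

/-- Key characterization: all ancestors fail the predicate iff `a` is the minimum. -/
lemma anc_pred_false_iff (hinj : Function.Injective v) :
    ∀ (t : FullBinTree α), (inorder t).Nodup → ValOrdered v t → ∀ a ∈ leafList t,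
      ((∀ b ∈ anc t a, predB t v a b = false) ↔ a = minNode v t) := by
  intro t
  induction t with
  | leaf x =>
    intro _ _ a ha
    simp only [leafList, List.mem_singleton] at ha
    subst ha
    simp [anc_leaf, minNode]
  | node l x r ihl ihr =>
    intro hnd hval a ha
    obtain ⟨h1, h2, hvl, hvr⟩ := valOrdered_node hval
    have hsubl : Sub l (node l x r) := Sub.left x (Sub.refl l)
    have hsubr : Sub r (node l x r) := Sub.right x (Sub.refl r)
    have hat : a ∈ inorder (node l x r) :=
      leafList_subset_inorder _ a ha
    have hxiff : (predB (node l x r) v a x = false) ↔ a = minNode v (node l x r) := by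
      rw [Bool.eq_false_iff, Ne, predB_eq_true_iff,
        minNode_eq_iff hinj hval hat]
      push_neg
      constructor
      · intro h u hu
        rw [subtreeAt_x] at h
        exact h u hu
      · intro h u hu
        rw [subtreeAt_x] at hu
        exact h u hu
    rcases leaf_mem_cases hnd ha with ⟨hal, haL⟩ | ⟨hal, hax, haR⟩
    · rw [anc_left hnd hal]
      simp only [List.mem_append, List.mem_singleton]
      constructor
      · intro h
        exact hxiff.mp (h x (Or.inr rfl))
      · intro h b hb
        rcases hb with hb | rfl
        · rw [predB_anc_left hnd hal b hb]
          have hml : a = minNode v l :=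
            minNode_sub hinj hval hsubl hal h
          exact ((ihl (nodup_node hnd).1 hvl a haL).mpr hml) b hb
        · exact hxiff.mpr h
    · have har : a ∈ inorder r := leafList_subset_inorder r a haR
      rw [anc_right hal hax]
      simp only [List.mem_append, List.mem_singleton]
      constructor
      · intro h
        exact hxiff.mp (h x (Or.inr rfl))
      · intro h b hb
        rcases hb with hb | rfl
        · rw [predB_anc_right hnd har b hb]
          have hmr : a = minNode v r :=
            minNode_sub hinj hval hsubr har h
          exact ((ihr (nodup_node hnd).2.1 hvr a haR).mpr hmr) b hb
        · exact hxiff.mpr h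

lemma bOf_eq_none_iff (hinj : Function.Injective v) {t : FullBinTree α}
    (hnd : (inorder t).Nodup) (hval : ValOrdered v t) {a : α} (ha : a ∈ leafList t) :
    bOf t v a = none ↔ a = minNode v t := by
  rw [bOf_eq_find, List.find?_eq_none, ← anc_pred_false_iff hinj t hnd hval a ha]
  simp

lemma findIdx?_anc_eq_none_iff (hinj : Function.Injective v) {t : FullBinTree α}
    (hnd : (inorder t).Nodup) (hval : ValOrdered v t) {a : α} (ha : a ∈ leafList t) :
    (anc t a).findIdx? (predB t v a) = none ↔ a = minNode v t := by
  rw [List.findIdx?_eq_none_iff, ← anc_pred_false_iff hinj t hnd hval a ha]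

end Aux2
section Aux3

variable {α : Type} [DecidableEq α] {v : α → ℝ}

lemma bOf_node_left {l r : FullBinTree α} {x a : α}
    (hnd : (inorder (node l x r)).Nodup) (hal : a ∈ inorder l) :
    bOf (node l x r) v a = (bOf l v a).or
      (if (inorder (node l x r)).any (fun u => decide (v u < v a)) then some x
        else none) := by
  rw [bOf_eq_find, anc_left hnd hal, List.find?_append,
    find?_congr _ (predB_anc_left hnd hal), ← bOf_eq_find]
  congr 1
  rw [List.find?_cons]
  by_cases h : predB (node l x r) v a x = true
  · rw [h, if_pos (by rw [← predB_x]; exact h)]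
  · rw [Bool.not_eq_true] at h
    rw [h, if_neg (by rw [← predB_x, h]; simp)]
    rfl

lemma bOf_node_right {l r : FullBinTree α} {x a : α}
    (hnd : (inorder (node l x r)).Nodup) (har : a ∈ inorder r)
    (hal : a ∉ inorder l) (hax : a ≠ x) :
    bOf (node l x r) v a = (bOf r v a).or
      (if (inorder (node l x r)).any (fun u => decide (v u < v a)) then some x
        else none) := by
  rw [bOf_eq_find, anc_right hal hax, List.find?_append,
    find?_congr _ (predB_anc_right hnd har), ← bOf_eq_find]
  congr 1
  rw [List.find?_cons]
  by_cases h : predB (node l x r) v a x = true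
  · rw [h, if_pos (by rw [← predB_x]; exact h)]
  · rw [Bool.not_eq_true] at h
    rw [h, if_neg (by rw [← predB_x, h]; simp)]
    rfl

lemma bOf_sub (hinj : Function.Injective v) {s t : FullBinTree α} (hsub : Sub s t) :
    (inorder t).Nodup → ValOrdered v t → ∀ a ∈ leafList s, a ≠ minNode v s →
      bOf t v a = bOf s v a := by
  induction hsub with
  | refl => intro _ _ a _ _; rfl
  | @left l r x h ih =>
    intro hnd hval a ha hne
    obtain ⟨hndl, hndr, _, _, _⟩ := nodup_node hnd
    obtain ⟨_, _, hvl, hvr⟩ := valOrdered_node hval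
    have haL : a ∈ leafList l := (sub_leafList h).subset ha
    have hal : a ∈ inorder l := leafList_subset_inorder l a haL
    rw [bOf_node_left hnd hal, ih hndl hvl a ha hne]
    have hsome : bOf l v a ≠ none := by
      rw [Ne, bOf_eq_none_iff hinj hndl hvl haL]
      intro hmin
      exact hne (minNode_sub hinj hvl h (leafList_subset_inorder s a ha) hmin)
    obtain ⟨b, hb⟩ := Option.ne_none_iff_exists'.mp hsome
    rw [ih hndl hvl a ha hne] at hb
    rw [hb]
    rfl
  | @right l r x h ih =>
    intro hnd hval a ha hne
    obtain ⟨hndl, hndr, _, hxr, hdisj⟩ := nodup_node hnd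
    obtain ⟨_, _, hvl, hvr⟩ := valOrdered_node hval
    have haR : a ∈ leafList r := (sub_leafList h).subset ha
    have har : a ∈ inorder r := leafList_subset_inorder r a haR
    have hal : a ∉ inorder l := fun hmem => hdisj a hmem har
    have hax : a ≠ x := fun hmem => hxr (hmem ▸ har)
    rw [bOf_node_right hnd har hal hax, ih hndr hvr a ha hne]
    have hsome : bOf r v a ≠ none := by
      rw [Ne, bOf_eq_none_iff hinj hndr hvr haR]
      intro hmin
      exact hne (minNode_sub hinj hvr h (leafList_subset_inorder s a ha) hmin)
    obtain ⟨b, hb⟩ := Option.ne_none_iff_exists'.mp hsome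
    rw [ih hndr hvr a ha hne] at hb
    rw [hb]
    rfl

lemma any_lt_iff_ne_min (hinj : Function.Injective v) {t : FullBinTree α}
    (hval : ValOrdered v t) {a : α} (hat : a ∈ inorder t) :
    ((inorder t).any (fun u => decide (v u < v a)) = true) ↔ a ≠ minNode v t := by
  rw [Ne, minNode_eq_iff hinj hval hat]
  push_neg
  simp

/-- Forward characterization of `bOf _ _ _ = some b`. -/
lemma bOf_eq_some (hinj : Function.Injective v) :
    ∀ (t : FullBinTree α), (inorder t).Nodup → ValOrdered v t →
      ∀ a ∈ leafList t, ∀ b, bOf t v a = some b →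
      ∃ l' r', Sub (node l' b r') t ∧
        ((a ∈ inorder l' ∧ a = minNode v l') ∨ (a ∈ inorder r' ∧ a = minNode v r')) ∧
        a ≠ minNode v (node l' b r') := by
  intro t
  induction t with
  | leaf x =>
    intro _ _ a ha b hb
    simp only [leafList, List.mem_singleton] at ha
    subst ha
    rw [bOf_eq_find, anc_leaf] at hb
    simp at hb
  | node l x r ihl ihr =>
    intro hnd hval a ha b hb
    obtain ⟨hndl, hndr, _, _, _⟩ := nodup_node hnd
    obtain ⟨_, _, hvl, hvr⟩ := valOrdered_node hval
    have hat : a ∈ inorder (node l x r) := leafList_subset_inorder _ a ha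
    rcases leaf_mem_cases hnd ha with ⟨hal, haL⟩ | ⟨hal, hax, haR⟩
    · rw [bOf_node_left hnd hal] at hb
      rcases hbl : bOf l v a with _ | b'
      · rw [hbl, Option.none_or] at hb
        have hmin : a = minNode v l := (bOf_eq_none_iff hinj hndl hvl haL).mp hbl
        by_cases hany : (inorder (node l x r)).any (fun u => decide (v u < v a)) = true
        · rw [if_pos hany] at hb
          obtain rfl : x = b := Option.some_injective _ hb
          exact ⟨l, r, Sub.refl _, Or.inl ⟨hal, hmin⟩,
            (any_lt_iff_ne_min hinj hval hat).mp hany⟩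
        · rw [if_neg hany] at hb
          exact absurd hb (by simp)
      · rw [hbl] at hb
        rw [show (some b').or _ = some b' from rfl] at hb
        obtain rfl : b' = b := Option.some_injective _ hb
        obtain ⟨l', r', hsub, hmem, hne⟩ := ihl hndl hvl a haL b' hbl
        exact ⟨l', r', Sub.left x hsub, hmem, hne⟩
    · have har : a ∈ inorder r := leafList_subset_inorder r a haR
      rw [bOf_node_right hnd har hal hax] at hb
      rcases hbr : bOf r v a with _ | b'
      · rw [hbr, Option.none_or] at hb
        have hmin : a = minNode v r := (bOf_eq_none_iff hinj hndr hvr haR).mp hbr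
        by_cases hany : (inorder (node l x r)).any (fun u => decide (v u < v a)) = true
        · rw [if_pos hany] at hb
          obtain rfl : x = b := Option.some_injective _ hb
          exact ⟨l, r, Sub.refl _, Or.inr ⟨har, hmin⟩,
            (any_lt_iff_ne_min hinj hval hat).mp hany⟩
        · rw [if_neg hany] at hb
          exact absurd hb (by simp)
      · rw [hbr] at hb
        rw [show (some b').or _ = some b' from rfl] at hb
        obtain rfl : b' = b := Option.some_injective _ hb
        obtain ⟨l', r', hsub, hmem, hne⟩ := ihr hndr hvr a haR b' hbr
        exact ⟨l', r', Sub.right x hsub, hmem, hne⟩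

/-- Backward characterization of `bOf _ _ _ = some b`. -/
lemma bOf_eq_some_of (hinj : Function.Injective v) {t l' r' : FullBinTree α} {b a : α}
    (hnd : (inorder t).Nodup) (hval : ValOrdered v t)
    (hsub : Sub (node l' b r') t)
    (hmem : (a ∈ inorder l' ∧ a = minNode v l') ∨ (a ∈ inorder r' ∧ a = minNode v r'))
    (hne : a ≠ minNode v (node l' b r')) :
    bOf t v a = some b := by
  have hndN : (inorder (node l' b r')).Nodup := (sub_inorder hsub).nodup hnd
  have hvalN : ValOrdered v (node l' b r') := valOrdered_sub hsub hval
  obtain ⟨hndl, hndr, hbl, hbr, hdisj⟩ := nodup_node hndN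
  obtain ⟨_, _, hvl, hvr⟩ := valOrdered_node hvalN
  have haN : a ∈ leafList (node l' b r') := by
    rcases hmem with ⟨_, hm⟩ | ⟨_, hm⟩
    · rw [hm]
      simp only [leafList, List.mem_append]
      exact Or.inl (minNode_mem_leafList l')
    · rw [hm]
      simp only [leafList, List.mem_append]
      exact Or.inr (minNode_mem_leafList r')
  rw [bOf_sub hinj hsub hnd hval a haN hne]
  have hatN : a ∈ inorder (node l' b r') := leafList_subset_inorder _ a haN
  have hany : (inorder (node l' b r')).any (fun u => decide (v u < v a)) = true :=
    (any_lt_iff_ne_min hinj hvalN hatN).mpr hne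
  rcases hmem with ⟨hal, hm⟩ | ⟨har, hm⟩
  · rw [bOf_node_left hndN hal,
      (bOf_eq_none_iff hinj hndl hvl (hm ▸ minNode_mem_leafList l' : a ∈ leafList l')).mpr hm,
      Option.none_or, if_pos hany]
  · have hal : a ∉ inorder l' := fun hmem' => hdisj a hmem' har
    have hax : a ≠ b := fun hmem' => hbr (hmem' ▸ har)
    rw [bOf_node_right hndN har hal hax,
      (bOf_eq_none_iff hinj hndr hvr (hm ▸ minNode_mem_leafList r' : a ∈ leafList r')).mpr hm,
      Option.none_or, if_pos hany]

/-- The subtree containing a given internal node is unique (by `Nodup`). -/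
lemma sub_node_eq_subtreeAt {t l' r' : FullBinTree α} {b : α}
    (hnd : (inorder t).Nodup) (hsub : Sub (node l' b r') t) :
    node l' b r' = subtreeAt t b := by
  induction hsub with
  | refl => exact subtreeAt_x.symm
  | @left l r x h ih =>
    have hbl : b ∈ inorder l := (sub_inorder h).subset (rootLabel_mem_inorder (node l' b r'))
    rw [subtreeAt_left hnd hbl]
    exact ih (nodup_node hnd).1
  | @right l r x h ih =>
    obtain ⟨_, _, _, hxr, hdisj⟩ := nodup_node hnd
    have hbr : b ∈ inorder r := (sub_inorder h).subset (rootLabel_mem_inorder (node l' b r'))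
    rw [subtreeAt_right (fun hm => hdisj b hm hbr) (fun hm => hxr (by rwa [hm] at hbr))]
    exact ih (nodup_node hnd).2.1

lemma internal_mem_sub {t : FullBinTree α} {b : α} (hb : b ∈ internalList t) :
    ∃ l' r', Sub (node l' b r') t := by
  induction t with
  | leaf x => simp [internalList] at hb
  | node l x r ihl ihr =>
    simp only [internalList, List.mem_append, List.mem_singleton] at hb
    rcases hb with (hb | rfl) | hb
    · obtain ⟨l', r', h⟩ := ihl hb
      exact ⟨l', r', Sub.left x h⟩
    · exact ⟨l, r, Sub.refl _⟩
    · obtain ⟨l', r', h⟩ := ihr hb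
      exact ⟨l', r', Sub.right x h⟩

lemma sub_internal_mem {t l' r' : FullBinTree α} {b : α}
    (hsub : Sub (node l' b r') t) : b ∈ internalList t := by
  refine (sub_internalList hsub).subset ?_
  simp [internalList]

end Aux3
section Aux4

variable {α : Type} [DecidableEq α] {v : α → ℝ}

lemma pathEdges_def (t : FullBinTree α) (a : α) :
    pathEdges t v a =
      match (anc t a).findIdx? (predB t v a) with
      | some k => ((a :: (anc t a).take (k+1)).zip ((anc t a).take (k+1))).map
          (fun cp => (cp.1, some cp.2))
      | none => ((a :: anc t a).zip (anc t a)).map (fun cp => (cp.1, some cp.2))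
          ++ [((a :: anc t a).getLast (List.cons_ne_nil _ _), none)] := rfl

lemma pathEdges_of_some {t : FullBinTree α} {a : α} {k : ℕ}
    (h : (anc t a).findIdx? (predB t v a) = some k) :
    pathEdges t v a = ((a :: (anc t a).take (k+1)).zip ((anc t a).take (k+1))).map
      (fun cp => (cp.1, some cp.2)) := by
  rw [pathEdges_def, h]

lemma pathEdges_of_none {t : FullBinTree α} {a : α}
    (h : (anc t a).findIdx? (predB t v a) = none) :
    pathEdges t v a = ((a :: anc t a).zip (anc t a)).map (fun cp => (cp.1, some cp.2))
      ++ [((a :: anc t a).getLast (List.cons_ne_nil _ _), none)] := by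
  rw [pathEdges_def, h]

end Aux4
section Aux5

variable {α : Type} [DecidableEq α] {v : α → ℝ}

/-- The specified list of (in-tree) edges of the Condition-II path of `a`:
the edges `(c, p)` such that `a` is the minimum of the subtree rooted at `c`. -/
noncomputable def specE (v : α → ℝ) [DecidableEq α] : FullBinTree α → α → List (α × α)
  | leaf _, _ => []
  | node l x r, a =>
    if a ∈ inorder l then
      specE v l a ++ (if a = minNode v l then [(rootLabel l, x)] else [])
    else
      specE v r a ++ (if a = minNode v r then [(rootLabel r, x)] else [])

/-- Forward membership characterization for `specE`. -/
lemma specE_mem_char :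
    ∀ (t : FullBinTree α), (inorder t).Nodup → ∀ a ∈ leafList t, ∀ c p,
      (c, p) ∈ specE v t a →
      ∃ l' r', Sub (node l' p r') t ∧
        ((rootLabel l' = c ∧ a ∈ inorder l' ∧ a = minNode v l') ∨
         (rootLabel r' = c ∧ a ∈ inorder r' ∧ a = minNode v r')) := by
  intro t
  induction t with
  | leaf x => intro _ a _ c p h; simp [specE] at h
  | node l x r ihl ihr =>
    intro hnd a ha c p h
    obtain ⟨hndl, hndr, _, _, _⟩ := nodup_node hnd
    rcases leaf_mem_cases hnd ha with ⟨hal, haL⟩ | ⟨hal, hax, haR⟩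
    · rw [specE, if_pos hal] at h
      rcases List.mem_append.mp h with h | h
      · obtain ⟨l', r', hsub, hmem⟩ := ihl hndl a haL c p h
        exact ⟨l', r', Sub.left x hsub, hmem⟩
      · by_cases hm : a = minNode v l
        · rw [if_pos hm, List.mem_singleton, Prod.mk.injEq] at h
          exact ⟨l, r, h.2 ▸ Sub.refl _, Or.inl ⟨h.1.symm, hal, hm⟩⟩
        · rw [if_neg hm] at h; simp at h
    · have har : a ∈ inorder r := leafList_subset_inorder r a haR
      rw [specE, if_neg hal] at h
      rcases List.mem_append.mp h with h | h
      · obtain ⟨l', r', hsub, hmem⟩ := ihr hndr a haR c p h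
        exact ⟨l', r', Sub.right x hsub, hmem⟩
      · by_cases hm : a = minNode v r
        · rw [if_pos hm, List.mem_singleton, Prod.mk.injEq] at h
          exact ⟨l, r, h.2 ▸ Sub.refl _, Or.inr ⟨h.1.symm, har, hm⟩⟩
        · rw [if_neg hm] at h; simp at h

/-- Backward membership for `specE`. -/
lemma mem_specE {t l' r' : FullBinTree α} {p c a : α}
    (hsub : Sub (node l' p r') t) (hnd : (inorder t).Nodup)
    (hmem : (rootLabel l' = c ∧ a ∈ inorder l' ∧ a = minNode v l') ∨
            (rootLabel r' = c ∧ a ∈ inorder r' ∧ a = minNode v r')) :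
    (c, p) ∈ specE v t a := by
  induction hsub with
  | refl =>
    rcases hmem with ⟨hc, hal, hm⟩ | ⟨hc, har, hm⟩
    · rw [specE, if_pos hal, if_pos hm, hc]
      simp
    · obtain ⟨_, _, _, _, hdisj⟩ := nodup_node hnd
      have hal : a ∉ inorder l' := fun hmem' => hdisj a hmem' har
      rw [specE, if_neg hal, if_pos hm, hc]
      simp
  | @left l r x h ih =>
    have hal : a ∈ inorder l := by
      rcases hmem with ⟨_, hal, _⟩ | ⟨_, har, _⟩
      · exact (sub_inorder h).subset ((sub_inorder (Sub.left p (Sub.refl l'))).subset hal)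
      · exact (sub_inorder h).subset ((sub_inorder (Sub.right p (Sub.refl r'))).subset har)
    rw [specE, if_pos hal]
    exact List.mem_append_left _ (ih (nodup_node hnd).1)
  | @right l r x h ih =>
    obtain ⟨_, _, _, _, hdisj⟩ := nodup_node hnd
    have har : a ∈ inorder r := by
      rcases hmem with ⟨_, hal', _⟩ | ⟨_, har', _⟩
      · exact (sub_inorder h).subset ((sub_inorder (Sub.left p (Sub.refl l'))).subset hal')
      · exact (sub_inorder h).subset ((sub_inorder (Sub.right p (Sub.refl r'))).subset har')
    have hal : a ∉ inorder l := fun hmem' => hdisj a hmem' har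
    rw [specE, if_neg hal]
    exact List.mem_append_left _ (ih (nodup_node hnd).2.1)

lemma zip_chain_concat {β : Type*} (a x : β) (L : List β) :
    ((a :: (L ++ [x])).zip (L ++ [x]))
      = ((a :: L).zip L) ++ [((a :: L).getLast (List.cons_ne_nil _ _), x)] := by
  induction L generalizing a with
  | nil => simp
  | cons y L ih =>
    show (a, y) :: ((y :: (L ++ [x])).zip (L ++ [x])) = _
    rw [ih y]
    rfl

/-- When `a` is the overall minimum, the full chain of edges up to the root
is exactly `specE`. -/
lemma chain_eq_specE (hinj : Function.Injective v) :
    ∀ (t : FullBinTree α), (inorder t).Nodup → ValOrdered v t →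
      ∀ a ∈ leafList t, a = minNode v t →
      (a :: anc t a).zip (anc t a) = specE v t a := by
  intro t
  induction t with
  | leaf x => intro _ _ a _ _; simp [anc_leaf, specE]
  | node l x r ihl ihr =>
    intro hnd hval a ha hmin
    obtain ⟨hndl, hndr, _, _, _⟩ := nodup_node hnd
    obtain ⟨_, _, hvl, hvr⟩ := valOrdered_node hval
    rcases leaf_mem_cases hnd ha with ⟨hal, haL⟩ | ⟨hal, hax, haR⟩
    · have hm : a = minNode v l :=
        minNode_sub hinj hval (Sub.left x (Sub.refl l)) hal hmin
      rw [anc_left hnd hal, zip_chain_concat, ihl hndl hvl a haL hm,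
        getLast_cons_anc hndl haL, specE, if_pos hal, if_pos hm]
    · have har : a ∈ inorder r := leafList_subset_inorder r a haR
      have hm : a = minNode v r :=
        minNode_sub hinj hval (Sub.right x (Sub.refl r)) har hmin
      rw [anc_right hal hax, zip_chain_concat, ihr hndr hvr a haR hm,
        getLast_cons_anc hndr haR, specE, if_neg hal, if_pos hm]

end Aux5
section Aux6

variable {α : Type} [DecidableEq α] {v : α → ℝ}

/-- Master lemma: `pathEdges` equals the specified edge list. -/
lemma pathEdges_eq_spec (hinj : Function.Injective v) :
    ∀ (t : FullBinTree α), (inorder t).Nodup → ValOrdered v t → ∀ a ∈ leafList t,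
      pathEdges t v a = (specE v t a).map (fun e => (e.1, some e.2))
        ++ (if a = minNode v t then [(rootLabel t, none)] else []) := by
  intro t
  induction t with
  | leaf x =>
    intro _ _ a ha
    simp only [leafList, List.mem_singleton] at ha; subst ha
    rw [pathEdges_of_none (by simp [anc_leaf])]
    simp [anc_leaf, specE, minNode, rootLabel]
  | node l x r ihl ihr =>
    intro hnd hval a ha
    obtain ⟨hndl, hndr, _, _, _⟩ := nodup_node hnd
    obtain ⟨_, _, hvl, hvr⟩ := valOrdered_node hval
    have hat : a ∈ inorder (node l x r) := leafList_subset_inorder _ a ha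
    rcases leaf_mem_cases hnd ha with ⟨hal, haL⟩ | ⟨hal, hax, haR⟩
    · -- a is a leaf of the left subtree
      have hanc : anc (node l x r) a = anc l a ++ [x] := anc_left hnd hal
      have hsubl : Sub l (node l x r) := Sub.left x (Sub.refl l)
      by_cases hml : a = minNode v l
      · have hnone : (anc l a).findIdx? (predB l v a) = none :=
          (findIdx?_anc_eq_none_iff hinj hndl hvl haL).mpr hml
        by_cases hmt : a = minNode v (node l x r)
        · -- B2 : a is the overall minimum
          have hidx : (anc (node l x r) a).findIdx? (predB (node l x r) v a) = none := by
            rw [hanc, List.findIdx?_append, findIdx?_congr _ (predB_anc_left hnd hal),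
              hnone, Option.none_or]
            rw [List.findIdx?_cons, predB_x,
              if_neg (by rw [any_lt_iff_ne_min hinj hval hat]; simp [hmt])]
            rfl
          rw [pathEdges_of_none hidx, chain_eq_specE hinj _ hnd hval a ha hmt,
            getLast_cons_anc hnd ha, if_pos hmt]
        · -- B1 : a is the minimum of l but not of the node
          have hidx : (anc (node l x r) a).findIdx? (predB (node l x r) v a)
              = some (0 + (anc l a).length) := by
            rw [hanc, List.findIdx?_append, findIdx?_congr _ (predB_anc_left hnd hal),
              hnone, Option.none_or]
            rw [List.findIdx?_cons, predB_x,
              if_pos (by rw [any_lt_iff_ne_min hinj hval hat]; exact hmt)]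
            rfl
          rw [pathEdges_of_some hidx]
          rw [hanc, List.take_of_length_le (by simp), zip_chain_concat,
            chain_eq_specE hinj l hndl hvl a haL hml, getLast_cons_anc hndl haL,
            specE, if_pos hal, if_pos hml, if_neg hmt]
          simp [rootLabel]
      · -- A : a is not the minimum of l
        have hne : (anc l a).findIdx? (predB l v a) ≠ none := by
          rw [Ne, findIdx?_anc_eq_none_iff hinj hndl hvl haL]; exact hml
        obtain ⟨k, hk⟩ := Option.ne_none_iff_exists'.mp hne
        have hklt : k < (anc l a).length := (List.findIdx?_eq_some_iff_findIdx_eq.mp hk).1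
        have hidx : (anc (node l x r) a).findIdx? (predB (node l x r) v a) = some k := by
          rw [hanc, List.findIdx?_append, findIdx?_congr _ (predB_anc_left hnd hal), hk]
          rfl
        have hmt : ¬ a = minNode v (node l x r) := fun hmt =>
          hml (minNode_sub hinj hval hsubl hal hmt)
        rw [pathEdges_of_some hidx, hanc, List.take_append_of_le_length (by omega),
          ← pathEdges_of_some hk, ihl hndl hvl a haL, if_neg hml, if_neg hmt,
          specE, if_pos hal, if_neg hml]
        simp
    · -- a is a leaf of the right subtree (mirror image)
      have har : a ∈ inorder r := leafList_subset_inorder r a haR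
      have hanc : anc (node l x r) a = anc r a ++ [x] := anc_right hal hax
      have hsubr : Sub r (node l x r) := Sub.right x (Sub.refl r)
      by_cases hmr : a = minNode v r
      · have hnone : (anc r a).findIdx? (predB r v a) = none :=
          (findIdx?_anc_eq_none_iff hinj hndr hvr haR).mpr hmr
        by_cases hmt : a = minNode v (node l x r)
        · have hidx : (anc (node l x r) a).findIdx? (predB (node l x r) v a) = none := by
            rw [hanc, List.findIdx?_append, findIdx?_congr _ (predB_anc_right hnd har),
              hnone, Option.none_or]
            rw [List.findIdx?_cons, predB_x,
              if_neg (by rw [any_lt_iff_ne_min hinj hval hat]; simp [hmt])]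
            rfl
          rw [pathEdges_of_none hidx, chain_eq_specE hinj _ hnd hval a ha hmt,
            getLast_cons_anc hnd ha, if_pos hmt]
        · have hidx : (anc (node l x r) a).findIdx? (predB (node l x r) v a)
              = some (0 + (anc r a).length) := by
            rw [hanc, List.findIdx?_append, findIdx?_congr _ (predB_anc_right hnd har),
              hnone, Option.none_or]
            rw [List.findIdx?_cons, predB_x,
              if_pos (by rw [any_lt_iff_ne_min hinj hval hat]; exact hmt)]
            rfl
          rw [pathEdges_of_some hidx]
          rw [hanc, List.take_of_length_le (by simp), zip_chain_concat,
            chain_eq_specE hinj r hndr hvr a haR hmr, getLast_cons_anc hndr haR,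
            specE, if_neg hal, if_pos hmr, if_neg hmt]
          simp [rootLabel]
      · have hne : (anc r a).findIdx? (predB r v a) ≠ none := by
          rw [Ne, findIdx?_anc_eq_none_iff hinj hndr hvr haR]; exact hmr
        obtain ⟨k, hk⟩ := Option.ne_none_iff_exists'.mp hne
        have hklt : k < (anc r a).length := (List.findIdx?_eq_some_iff_findIdx_eq.mp hk).1
        have hidx : (anc (node l x r) a).findIdx? (predB (node l x r) v a) = some k := by
          rw [hanc, List.findIdx?_append, findIdx?_congr _ (predB_anc_right hnd har), hk]
          rfl
        have hmt : ¬ a = minNode v (node l x r) := fun hmt =>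
          hmr (minNode_sub hinj hval hsubr har hmt)
        rw [pathEdges_of_some hidx, hanc, List.take_append_of_le_length (by omega),
          ← pathEdges_of_some hk, ihr hndr hvr a haR, if_neg hmr, if_neg hmt,
          specE, if_neg hal, if_neg hmr]
        simp

end Aux6
end FullBinTree

open FullBinTree

/-- In the unique tree satisfying Conditions I.1 and I.2, augmented
with the special root, the Condition-II paths of the leaves are pairwise edge-disjoint,
their union covers every edge of the augmented tree (including the edge to the special
root), and the map `a ↦ b(a)` is a bijection from the leaves onto the internal nodes
together with the special root (encoded by `none`). -/
theorem statement1 (n : ℕ) (v : Fin (2*n+1) → ℝ)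
    (hinj : Function.Injective v)
    (halt : ∀ (i : ℕ) (hi : i < 2*n+1) (hi1 : i+1 < 2*n+1),
      (Even i → v ⟨i, hi⟩ < v ⟨i+1, hi1⟩) ∧ (¬ Even i → v ⟨i+1, hi1⟩ < v ⟨i, hi⟩))
    (t : FullBinTree (Fin (2*n+1)))
    (hI1 : inorder t = List.finRange (2*n+1))
    (hI2 : ValOrdered v t) :
    (∀ a ∈ leafList t, ∀ a' ∈ leafList t, a ≠ a' →
      ∀ e, e ∈ pathEdges t v a → e ∉ pathEdges t v a') ∧
    (∀ p c, IsParentOf t p c → ∃ a ∈ leafList t, (c, some p) ∈ pathEdges t v a) ∧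
    (∃ a ∈ leafList t, (rootLabel t, (none : Option (Fin (2*n+1)))) ∈ pathEdges t v a) ∧
    Set.BijOn (bOf t v) {a | a ∈ leafList t}
      {o : Option (Fin (2*n+1)) | o = none ∨ ∃ b, b ∈ internalList t ∧ o = some b} := by
  have hnd : (inorder t).Nodup := by rw [hI1]; exact List.nodup_finRange _
  refine ⟨?_, ?_, ?_, ?_, ?_, ?_⟩
  · -- edge-disjointness
    intro a ha a' ha' hne e he he'
    rw [pathEdges_eq_spec hinj t hnd hI2 a ha] at he
    rw [pathEdges_eq_spec hinj t hnd hI2 a' ha'] at he'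
    rcases List.mem_append.mp he with he | he
    · obtain ⟨⟨c, p⟩, hcp, rfl⟩ := List.mem_map.mp he
      rcases List.mem_append.mp he' with he' | he'
      · obtain ⟨⟨c', p'⟩, hcp', heq⟩ := List.mem_map.mp he'
        obtain ⟨hc0, hp0⟩ : c' = c ∧ p' = p := by
          have h1 := congrArg Prod.fst heq
          have h2 := congrArg Prod.snd heq
          simp at h1 h2
          exact ⟨h1, h2⟩
        rw [hc0, hp0] at hcp'
        obtain ⟨l1, r1, hsub1, hmem1⟩ := specE_mem_char t hnd a ha c p hcp
        obtain ⟨l2, r2, hsub2, hmem2⟩ := specE_mem_char t hnd a' ha' c p hcp'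
        have hid : node l1 p r1 = node l2 p r2 :=
          (sub_node_eq_subtreeAt hnd hsub1).trans (sub_node_eq_subtreeAt hnd hsub2).symm
        obtain ⟨rfl, -, rfl⟩ : l1 = l2 ∧ p = p ∧ r1 = r2 := by
          injection hid with h1 h2 h3
          exact ⟨h1, h2, h3⟩
        have hndN : (inorder (node l1 p r1)).Nodup := (sub_inorder hsub1).nodup hnd
        obtain ⟨-, -, -, -, hdisj⟩ := nodup_node hndN
        rcases hmem1 with ⟨hc1, _, hm1⟩ | ⟨hc1, _, hm1⟩ <;>
          rcases hmem2 with ⟨hc2, _, hm2⟩ | ⟨hc2, _, hm2⟩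
        · exact hne (hm1.trans hm2.symm)
        · exact hdisj (rootLabel l1) (rootLabel_mem_inorder l1)
            (by rw [hc1, ← hc2]; exact rootLabel_mem_inorder r1)
        · exact hdisj (rootLabel l1) (rootLabel_mem_inorder l1)
            (by rw [hc2, ← hc1]; exact rootLabel_mem_inorder r1)
        · exact hne (hm1.trans hm2.symm)
      · -- (c, some p) in the `none`-suffix : impossible
        by_cases hm : a' = minNode v t
        · rw [if_pos hm, List.mem_singleton] at he'
          exact absurd (congrArg Prod.snd he') (by simp)
        · rw [if_neg hm] at he'; simp at he'
    · by_cases hm : a = minNode v t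
      · rw [if_pos hm, List.mem_singleton] at he
        subst he
        rcases List.mem_append.mp he' with he' | he'
        · obtain ⟨⟨c', p'⟩, hcp', heq⟩ := List.mem_map.mp he'
          exact absurd (congrArg Prod.snd heq) (by simp)
        · by_cases hm' : a' = minNode v t
          · exact hne (hm.trans hm'.symm)
          · rw [if_neg hm'] at he'; simp at he'
      · rw [if_neg hm] at he; simp at he
  · -- covering of the internal edges
    rintro p c ⟨l0, r0, hsub, hc | hc⟩
    · refine ⟨minNode v l0, ?_, ?_⟩
      · exact (sub_leafList hsub).subset
          (List.mem_append_left _ (minNode_mem_leafList l0))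
      · rw [pathEdges_eq_spec hinj t hnd hI2 _ ((sub_leafList hsub).subset
          (List.mem_append_left _ (minNode_mem_leafList l0)))]
        refine List.mem_append_left _ ?_
        exact List.mem_map_of_mem
          (mem_specE hsub hnd (Or.inl ⟨hc, minNode_mem_inorder l0, rfl⟩))
    · refine ⟨minNode v r0, ?_, ?_⟩
      · exact (sub_leafList hsub).subset
          (List.mem_append_right _ (minNode_mem_leafList r0))
      · rw [pathEdges_eq_spec hinj t hnd hI2 _ ((sub_leafList hsub).subset
          (List.mem_append_right _ (minNode_mem_leafList r0)))]
        refine List.mem_append_left _ ?_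
        exact List.mem_map_of_mem
          (mem_specE hsub hnd (Or.inr ⟨hc, minNode_mem_inorder r0, rfl⟩))
  · -- the edge to the special root
    refine ⟨minNode v t, minNode_mem_leafList t, ?_⟩
    rw [pathEdges_eq_spec hinj t hnd hI2 _ (minNode_mem_leafList t), if_pos rfl]
    exact List.mem_append_right _ (by simp)
  · -- MapsTo
    intro a ha
    simp only [Set.mem_setOf_eq] at ha ⊢
    rcases hb : bOf t v a with _ | b
    · exact Or.inl rfl
    · obtain ⟨l1, r1, hsub1, -, -⟩ := bOf_eq_some hinj t hnd hI2 a ha b hb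
      exact Or.inr ⟨b, sub_internal_mem hsub1, rfl⟩
  · -- InjOn
    intro a ha a' ha' heq
    simp only [Set.mem_setOf_eq] at ha ha'
    rcases hb : bOf t v a with _ | b
    · rw [hb] at heq
      have hb' : bOf t v a' = none := heq.symm
      rw [bOf_eq_none_iff hinj hnd hI2 ha] at hb
      rw [bOf_eq_none_iff hinj hnd hI2 ha'] at hb'
      exact hb.trans hb'.symm
    · rw [hb] at heq
      have hb' : bOf t v a' = some b := heq.symm
      obtain ⟨l1, r1, hsub1, hmem1, hne1⟩ := bOf_eq_some hinj t hnd hI2 a ha b hb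
      obtain ⟨l2, r2, hsub2, hmem2, hne2⟩ := bOf_eq_some hinj t hnd hI2 a' ha' b hb'
      have hid : node l1 b r1 = node l2 b r2 :=
        (sub_node_eq_subtreeAt hnd hsub1).trans (sub_node_eq_subtreeAt hnd hsub2).symm
      obtain ⟨rfl, -, rfl⟩ : l1 = l2 ∧ b = b ∧ r1 = r2 := by
        injection hid with h1 h2 h3
        exact ⟨h1, h2, h3⟩
      have hminN : minNode v (node l1 b r1)
          = if v (minNode v l1) ≤ v (minNode v r1) then minNode v l1 else minNode v r1 := rfl
      have key : ∀ z, ((z ∈ inorder l1 ∧ z = minNode v l1) ∨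
          (z ∈ inorder r1 ∧ z = minNode v r1)) → z ≠ minNode v (node l1 b r1) →
          z = (if v (minNode v l1) ≤ v (minNode v r1) then minNode v r1
                else minNode v l1) := by
        intro z hz hzne
        by_cases hle : v (minNode v l1) ≤ v (minNode v r1)
        · rw [if_pos hle]
          rcases hz with ⟨-, rfl⟩ | ⟨-, rfl⟩
          · exact absurd (by rw [hminN, if_pos hle]) hzne
          · rfl
        · rw [if_neg hle]
          rcases hz with ⟨-, rfl⟩ | ⟨-, rfl⟩
          · rfl
          · exact absurd (by rw [hminN, if_neg hle]) hzne
      exact (key a hmem1 hne1).trans (key a' hmem2 hne2).symm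
  · -- SurjOn
    rintro o (rfl | ⟨b, hb, rfl⟩)
    · exact ⟨minNode v t, minNode_mem_leafList t,
        (bOf_eq_none_iff hinj hnd hI2 (minNode_mem_leafList t)).mpr rfl⟩
    · obtain ⟨l0, r0, hsub⟩ := internal_mem_sub hb
      have hndN : (inorder (node l0 b r0)).Nodup := (sub_inorder hsub).nodup hnd
      obtain ⟨-, -, -, -, hdisj⟩ := nodup_node hndN
      have hne_min : minNode v l0 ≠ minNode v r0 := by
        intro h
        exact hdisj (minNode v l0) (minNode_mem_inorder l0)
          (h ▸ minNode_mem_inorder r0)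
      have hminN : minNode v (node l0 b r0)
          = if v (minNode v l0) ≤ v (minNode v r0) then minNode v l0 else minNode v r0 := rfl
      by_cases hle : v (minNode v l0) ≤ v (minNode v r0)
      · refine ⟨minNode v r0, ?_, ?_⟩
        · exact (sub_leafList hsub).subset
            (List.mem_append_right _ (minNode_mem_leafList r0))
        · exact bOf_eq_some_of hinj hnd hI2 hsub
            (Or.inr ⟨minNode_mem_inorder r0, rfl⟩)
            (by rw [hminN, if_pos hle]; exact hne_min.symm)
      · refine ⟨minNode v l0, ?_, ?_⟩
        · exact (sub_leafList hsub).subset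
            (List.mem_append_left _ (minNode_mem_leafList l0))
        · exact bOf_eq_some_of hinj hnd hI2 hsub
            (Or.inl ⟨minNode_mem_inorder l0, rfl⟩)
            (by rw [hminN, if_neg hle]; exact hne_min)
end

section
/- Let c be a generic linear list, f its piecewise linear map, and b an item with B = c_b. The connected component of the sublevel set f^{-1}((−∞, B]) containing b contains the left endpoint 1 of the domain if and only if c_q < B for every item q < b. (This characterizes the maxima that span windows whose wave is short on the left, i.e., the nodes of the left spine.) -/
/-!
On each segment `[n, n + 1]` the map is a convex combination of `c n` and `c (n + 1)`, so
`[1, b]` lies in the sublevel set at `c b` as soon as every item left of `b` does. Conversely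
the component is a connected subset of `ℝ`, hence an interval: if it reaches `1`, it contains
every item `q < b`, so `c q ≤ c b`, and genericity makes the inequality strict.
-/

/-- The piecewise linear map determined by the list `c` (on the domain `[1,m]`). -/
noncomputable def plMap (c : ℕ → ℝ) (x : ℝ) : ℝ :=
  c (Int.floor x).toNat +
    (x - (Int.floor x : ℝ)) * (c ((Int.floor x).toNat + 1) - c (Int.floor x).toNat)

/-- The set of points of the domain `[1,m]` with values in `[A,B]`. -/
def levelBand (m : ℕ) (c : ℕ → ℝ) (A B : ℝ) : Set ℝ :=
  {x : ℝ | x ∈ Set.Icc (1 : ℝ) (m : ℝ) ∧ plMap c x ∈ Set.Icc A B}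

/-- The sublevel set of the map at `s`, within the domain `[1,m]`. -/
def sublevel (m : ℕ) (c : ℕ → ℝ) (s : ℝ) : Set ℝ :=
  {x : ℝ | x ∈ Set.Icc (1 : ℝ) (m : ℝ) ∧ plMap c x ≤ s}

/-- The support of the frame spanned by the items `a` and `b`: the connected component
of `f⁻¹([f a, f b])` (within the domain) containing `a`. -/
def frameSupport (m : ℕ) (c : ℕ → ℝ) (a b : ℕ) : Set ℝ :=
  connectedComponentIn (levelBand m c (c a) (c b)) (a : ℝ)

/-- `W(a,b)` is a triple-panel window of the piecewise linear map of `c`: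
`a` and `b` are items with `c a < c b` lying in a common connected component `[x,y]`
of `f⁻¹([c a, c b])`, and the value at the end of the support away from the mirror
equals `c a`. -/
def IsTPW (m : ℕ) (c : ℕ → ℝ) (a b : ℕ) : Prop :=
  1 ≤ a ∧ a ≤ m ∧ 1 ≤ b ∧ b ≤ m ∧ c a < c b ∧
  (b : ℝ) ∈ frameSupport m c a b ∧
  (if a < b then plMap c (sSup (frameSupport m c a b)) = c a
   else plMap c (sInf (frameSupport m c a b)) = c a)

/-- `i` is an interior local minimum of the list `c`. -/
def IsLocMin (m : ℕ) (c : ℕ → ℝ) (i : ℕ) : Prop :=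
  1 < i ∧ i < m ∧ c i < c (i - 1) ∧ c i < c (i + 1)

/-- `i` is an interior local maximum of the list `c`. -/
def IsLocMax (m : ℕ) (c : ℕ → ℝ) (i : ℕ) : Prop :=
  1 < i ∧ i < m ∧ c (i - 1) < c i ∧ c (i + 1) < c i

/-- `i` is a critical item that is a leaf: an endpoint or an interior local minimum. -/
def IsCritLeaf (m : ℕ) (c : ℕ → ℝ) (i : ℕ) : Prop :=
  i = 1 ∨ i = m ∨ IsLocMin m c i

/-- `i` is a critical item of the list `c`. -/
def IsCritItem (m : ℕ) (c : ℕ → ℝ) (i : ℕ) : Prop :=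
  IsCritLeaf m c i ∨ IsLocMax m c i

lemma plMap_natCast (c : ℕ → ℝ) (n : ℕ) : plMap c n = c n := by
  simp [plMap]

lemma plMap_eq_of_mem_Ico (c : ℕ → ℝ) (n : ℕ) {x : ℝ} (hx : x ∈ Set.Ico (n : ℝ) (n + 1)) :
    plMap c x = c n + (x - n) * (c (n + 1) - c n) := by
  have hfloor : ⌊x⌋ = n := Int.floor_eq_iff.2 ⟨by exact_mod_cast hx.1, by exact_mod_cast hx.2⟩
  simp [plMap, hfloor]

lemma plMap_le_of_mem_Icc {c : ℕ → ℝ} {s : ℝ} (n : ℕ) (hn : c n ≤ s) (hn1 : c (n + 1) ≤ s)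
    {x : ℝ} (hx : x ∈ Set.Icc (n : ℝ) (n + 1)) : plMap c x ≤ s := by
  rcases eq_or_lt_of_le hx.2 with rfl | hlt
  · exact_mod_cast (plMap_natCast c (n + 1)).trans_le hn1
  · rw [plMap_eq_of_mem_Ico c n ⟨hx.1, hlt⟩]
    have ht : 0 ≤ x - n := sub_nonneg.2 hx.1
    nlinarith [mul_nonneg ht (sub_nonneg.2 hn1), mul_nonneg (by linarith : (0 : ℝ) ≤ 1 - (x - n))
      (sub_nonneg.2 hn)]

lemma Icc_subset_sublevel {m b : ℕ} {c : ℕ → ℝ} {s : ℝ} (hbm : b ≤ m)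
    (h : ∀ q, 1 ≤ q → q < b → c q ≤ s) (hb : c b ≤ s) : Set.Icc (1 : ℝ) b ⊆ sublevel m c s := by
  rintro x ⟨hx1, hxb⟩
  refine ⟨⟨hx1, hxb.trans (by exact_mod_cast hbm)⟩, ?_⟩
  rcases eq_or_lt_of_le hxb with rfl | hlt
  · rwa [plMap_natCast]
  · have hx0 : (0 : ℝ) ≤ x := zero_le_one.trans hx1
    have hn1 : 1 ≤ ⌊x⌋₊ := Nat.le_floor (by exact_mod_cast hx1)
    have hnb : ⌊x⌋₊ < b := (Nat.floor_lt hx0).2 hlt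
    have hsucc : c (⌊x⌋₊ + 1) ≤ s := by
      rcases (Nat.succ_le_of_lt hnb).lt_or_eq with hlt | rfl
      exacts [h _ (by omega) hlt, hb]
    exact plMap_le_of_mem_Icc ⌊x⌋₊ (h _ hn1 hnb) hsucc
      ⟨Nat.floor_le hx0, (Nat.lt_floor_add_one x).le⟩

lemma le_of_one_mem_connectedComponentIn_sublevel {m q : ℕ} {c : ℕ → ℝ} {s x : ℝ}
    (h1 : (1 : ℝ) ∈ connectedComponentIn (sublevel m c s) x) (hq1 : 1 ≤ q) (hqx : (q : ℝ) ≤ x) :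
    c q ≤ s := by
  have hx : x ∈ connectedComponentIn (sublevel m c s) x :=
    mem_connectedComponentIn (connectedComponentIn_nonempty_iff.1 ⟨1, h1⟩)
  have hq : (q : ℝ) ∈ connectedComponentIn (sublevel m c s) x :=
    isPreconnected_connectedComponentIn.ordConnected.out h1 hx ⟨by exact_mod_cast hq1, hqx⟩
  simpa [plMap_natCast] using (connectedComponentIn_subset _ _ hq).2

theorem statement5_general (m : ℕ) (c : ℕ → ℝ)
    (hgen : Set.InjOn c (Set.Icc 1 m))
    (b : ℕ) (hb1 : 1 ≤ b) (hbm : b ≤ m) :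
    ((1 : ℝ) ∈ connectedComponentIn (sublevel m c (c b)) (b : ℝ)) ↔
      (∀ q, 1 ≤ q → q < b → c q < c b) := by
  constructor
  · intro h1 q hq1 hqb
    exact (le_of_one_mem_connectedComponentIn_sublevel h1 hq1 (by exact_mod_cast hqb.le)).lt_of_ne
      (hgen.ne ⟨hq1, by omega⟩ ⟨hb1, hbm⟩ hqb.ne)
  · intro h
    have hsub : Set.Icc (1 : ℝ) b ⊆ sublevel m c (c b) :=
      Icc_subset_sublevel hbm (fun q hq1 hqb => (h q hq1 hqb).le) le_rfl
    have hb : (1 : ℝ) ≤ b := by exact_mod_cast hb1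
    exact isPreconnected_Icc.subset_connectedComponentIn ⟨hb, le_rfl⟩ hsub ⟨le_rfl, hb⟩

/-- For an item `b` of a generic linear list, the connected component
of the sublevel set `f⁻¹((-∞, c b])` containing `b` contains the left endpoint `1` of
the domain if and only if every item to the left of `b` has value smaller than `c b`. -/
theorem statement5 (m : ℕ) (hm : 2 ≤ m) (c : ℕ → ℝ)
    (hgen : Set.InjOn c (Set.Icc 1 m))
    (b : ℕ) (hb1 : 1 ≤ b) (hbm : b ≤ m) :
    ((1 : ℝ) ∈ connectedComponentIn (sublevel m c (c b)) (b : ℝ)) ↔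
      (∀ q, 1 ≤ q → q < b → c q < c b) :=
  statement5_general m c hgen b hb1 hbm
end

section
/- Let w and w' be injective real value assignments on the items {1, …, m} that differ at exactly one item, and let p ≠ q be items that are contiguous in both w and w', with w(p) < w(q) and w'(p) > w'(q). Then for all items u, v with {u,v} ≠ {p,q}: w(u) < w(v) if and only if w'(u) < w'(v); that is, the order of the items by value is the same in w and w' except that p and q are swapped. -/
/-!
Since `w p < w q` but `w' q < w' p`, the changed item is `p` or `q`, so `w` and `w'` agree on
every other item and on one of `p`, `q`. Contiguity puts each other item strictly outside both
intervals `[w p, w q]` and `[w' q, w' p]`, and because these intervals share an endpoint the item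
lies below both or above both. Its comparisons with `p` and `q` are therefore the same under
`w` and `w'`.
-/

open Set

section
variable {ι α : Type*} [LinearOrder α]

lemma forall_lt_or_forall_gt_of_notMem_Icc {a b a' b' x : α} (hab : a < b) (hba : b' < a')
    (hx : x ∉ Icc a b) (hx' : x ∉ Icc b' a') (hfix : a = a' ∨ b = b') :
    (∀ c ∈ ({a, b, a', b'} : Set α), x < c) ∨ ∀ c ∈ ({a, b, a', b'} : Set α), c < x := by
  simp only [mem_Icc, not_and_or, not_le] at hx hx'
  simp only [mem_insert_iff, mem_singleton_iff, forall_eq_or_imp, forall_eq]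
  rcases hfix with rfl | rfl <;> grind

lemma lt_iff_lt_and_lt_iff_lt_of_forall_lt_or_forall_gt {s : Set α} {x c c' : α}
    (h : (∀ d ∈ s, x < d) ∨ ∀ d ∈ s, d < x) (hc : c ∈ s) (hc' : c' ∈ s) :
    (x < c ↔ x < c') ∧ (c < x ↔ c' < x) := by
  rcases h with h | h
  · exact ⟨iff_of_true (h c hc) (h c' hc'),
      iff_of_false (h c hc).not_gt (h c' hc').not_gt⟩
  · exact ⟨iff_of_false (h c hc).not_gt (h c' hc').not_gt,
      iff_of_true (h c hc) (h c' hc')⟩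

variable {S : Set ι} {w w' : ι → α} {p q j : ι}

lemma eq_or_eq_of_eqOn_diff_singleton (hp : p ∈ S) (hq : q ∈ S) (h : EqOn w w' (S \ {j}))
    (horder : w p < w q) (horder' : w' q < w' p) : j = p ∨ j = q := by
  by_contra! hj
  rw [← h ⟨hp, hj.1.symm⟩, ← h ⟨hq, hj.2.symm⟩] at horder'
  exact horder.asymm horder'

theorem lt_iff_lt_of_eqOn_diff_singleton_of_contiguous (hp : p ∈ S) (hq : q ∈ S)
    (hagree : EqOn w w' (S \ {j}))
    (hcontig : ∀ u ∈ S \ {p, q}, w u ∉ Icc (w p) (w q))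
    (hcontig' : ∀ u ∈ S \ {p, q}, w' u ∉ Icc (w' q) (w' p))
    (horder : w p < w q) (horder' : w' q < w' p) {u v : ι} (hu : u ∈ S) (hv : v ∈ S)
    (huv : ¬((u = p ∧ v = q) ∨ (u = q ∧ v = p))) :
    w u < w v ↔ w' u < w' v := by
  have hj := eq_or_eq_of_eqOn_diff_singleton hp hq hagree horder horder'
  have hagree' : EqOn w w' (S \ {p, q}) :=
    hagree.mono (sdiff_subset_sdiff_right (by rcases hj with rfl | rfl <;> simp))
  have hfix : w p = w' p ∨ w q = w' q := by
    rcases hj with rfl | rfl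
    · exact .inr (hagree ⟨hq, fun h => horder.ne (congrArg w h.symm)⟩)
    · exact .inl (hagree ⟨hp, fun h => horder.ne (congrArg w h)⟩)
  have hside : ∀ x ∈ S \ {p, q}, (∀ c ∈ ({w p, w q, w' p, w' q} : Set α), w x < c) ∨
      ∀ c ∈ ({w p, w q, w' p, w' q} : Set α), c < w x := fun x hx =>
    forall_lt_or_forall_gt_of_notMem_Icc horder horder' (hcontig x hx)
      (hagree' hx ▸ hcontig' x hx) hfix
  have hmem : ∀ r ∈ ({p, q} : Set ι), w r ∈ ({w p, w q, w' p, w' q} : Set α) ∧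
      w' r ∈ ({w p, w q, w' p, w' q} : Set α) := by
    rintro r (rfl | rfl) <;> simp
  by_cases hu' : u ∈ ({p, q} : Set ι) <;> by_cases hv' : v ∈ ({p, q} : Set ι)
  · have : u = v := by
      rcases hu' with rfl | rfl <;> rcases hv' with rfl | rfl <;> simp_all
    subst this
    simp
  · have := (lt_iff_lt_and_lt_iff_lt_of_forall_lt_or_forall_gt (hside v ⟨hv, hv'⟩)
      (hmem u hu').1 (hmem u hu').2).2
    rwa [hagree' ⟨hv, hv'⟩] at this ⊢
  · have := (lt_iff_lt_and_lt_iff_lt_of_forall_lt_or_forall_gt (hside u ⟨hu, hu'⟩)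
      (hmem v hv').1 (hmem v hv').2).1
    rwa [hagree' ⟨hu, hu'⟩] at this ⊢
  · rw [hagree' ⟨hu, hu'⟩, hagree' ⟨hv, hv'⟩]

end

theorem statement6_general (m : ℕ) (w w' : ℕ → ℝ)
    (p q : ℕ) (hp1 : 1 ≤ p) (hpm : p ≤ m) (hq1 : 1 ≤ q) (hqm : q ≤ m)
    (hdiff : ∃ j, 1 ≤ j ∧ j ≤ m ∧ w j ≠ w' j ∧ ∀ i, 1 ≤ i → i ≤ m → i ≠ j → w i = w' i)
    (hcontig : ∀ u, 1 ≤ u → u ≤ m → u ≠ p → u ≠ q →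
      w u ∉ Set.Icc (min (w p) (w q)) (max (w p) (w q)))
    (hcontig' : ∀ u, 1 ≤ u → u ≤ m → u ≠ p → u ≠ q →
      w' u ∉ Set.Icc (min (w' p) (w' q)) (max (w' p) (w' q)))
    (horder : w p < w q) (horder' : w' q < w' p) :
    ∀ u v : ℕ, 1 ≤ u → u ≤ m → 1 ≤ v → v ≤ m →
      ¬((u = p ∧ v = q) ∨ (u = q ∧ v = p)) →
      (w u < w v ↔ w' u < w' v) := by
  obtain ⟨j, -, -, -, hj⟩ := hdiff
  intro u v hu1 hum hv1 hvm huv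
  refine lt_iff_lt_of_eqOn_diff_singleton_of_contiguous (S := Icc 1 m) (j := j) ⟨hp1, hpm⟩
    ⟨hq1, hqm⟩ (fun i hi => hj i hi.1.1 hi.1.2 hi.2) ?_ ?_ horder horder' ⟨hu1, hum⟩
    ⟨hv1, hvm⟩ huv
  · rintro x ⟨⟨hx1, hxm⟩, hx⟩
    simpa only [min_eq_left horder.le, max_eq_right horder.le] using
      hcontig x hx1 hxm (fun h => hx (.inl h)) (fun h => hx (.inr h))
  · rintro x ⟨⟨hx1, hxm⟩, hx⟩
    simpa only [min_eq_right horder'.le, max_eq_left horder'.le] using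
      hcontig' x hx1 hxm (fun h => hx (.inl h)) (fun h => hx (.inr h))

/-- If two injective value assignments on the items `1, …, m` differ
at exactly one item, and `p ≠ q` are contiguous in both with `w p < w q` and
`w' p > w' q`, then the order of the items by value is the same in `w` and `w'`
except that `p` and `q` are swapped. -/
theorem statement6 (m : ℕ) (w w' : ℕ → ℝ)
    (hw : Set.InjOn w (Set.Icc 1 m)) (hw' : Set.InjOn w' (Set.Icc 1 m))
    (p q : ℕ) (hp1 : 1 ≤ p) (hpm : p ≤ m) (hq1 : 1 ≤ q) (hqm : q ≤ m) (hpq : p ≠ q)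
    (hdiff : ∃ j, 1 ≤ j ∧ j ≤ m ∧ w j ≠ w' j ∧ ∀ i, 1 ≤ i → i ≤ m → i ≠ j → w i = w' i)
    (hcontig : ∀ u, 1 ≤ u → u ≤ m → u ≠ p → u ≠ q →
      w u ∉ Set.Icc (min (w p) (w q)) (max (w p) (w q)))
    (hcontig' : ∀ u, 1 ≤ u → u ≤ m → u ≠ p → u ≠ q →
      w' u ∉ Set.Icc (min (w' p) (w' q)) (max (w' p) (w' q)))
    (horder : w p < w q) (horder' : w' q < w' p) :
    ∀ u v : ℕ, 1 ≤ u → u ≤ m → 1 ≤ v → v ≤ m →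
      ¬((u = p ∧ v = q) ∨ (u = q ∧ v = p)) →
      (w u < w v ↔ w' u < w' v) :=
  statement6_general m w w' p q hp1 hpm hq1 hqm hdiff hcontig hcontig' horder horder'
end
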